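/- In a residuated lattice, every proper α-filter equals the intersection of the prime α-filters containing it. -/

import Mathlib

/-- A (bounded, integral, commutative) residuated lattice. -/
class ResLattice (A : Type*) extends Lattice A, CommMonoid A, OrderBot A where
  himp : A → A → A
  adjunction : ∀ x y z : A, x * y ≤ z ↔ x ≤ himp y z
  le_one : ∀ x : A, x ≤ 1

variable {A : Type*} [ResLattice A]

/-- Coannihilator of a subset: `X^⊥ = {a | a ⊔ x = 1 for all x ∈ X}`. -/
def Coann (X : Set A) : Set A := {a | ∀ x ∈ X, a ⊔ x = 1}

/-- Coannulet of an element: `x^⊥`. -/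
def rperp (x : A) : Set A := Coann {x}

/-- The principal filter generated by `x`. -/
def PFil (x : A) : Set A := {a | ∃ n : ℕ, 0 < n ∧ x ^ n ≤ a}

/-- Filters of a residuated lattice. -/
def IsRLFilter (F : Set A) : Prop :=
  F.Nonempty ∧ (∀ x ∈ F, ∀ y ∈ F, x * y ∈ F) ∧ (∀ x ∈ F, ∀ y : A, x ⊔ y ∈ F)

/-- Prime filters. -/
def IsRLPrime (P : Set A) : Prop :=
  IsRLFilter P ∧ P ≠ Set.univ ∧ ∀ x y : A, x ⊔ y ∈ P → x ∈ P ∨ y ∈ P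

/-- Minimal prime filters. -/
def IsRLMinPrime (P : Set A) : Prop :=
  IsRLPrime P ∧ ∀ Q : Set A, IsRLPrime Q → Q ⊆ P → Q = P

/-- Quasicomplemented residuated lattice. -/
def Quasicomplemented (A : Type*) [ResLattice A] : Prop :=
  ∀ x : A, ∃ y : A, Coann (rperp x) = rperp y

/-- α-filters. -/
def IsAlphaFilter (F : Set A) : Prop :=
  IsRLFilter F ∧ ∀ x ∈ F, Coann (rperp x) ⊆ F

/-- The α-filter generated by a subset. -/
def alphaGen (X : Set A) : Set A := ⋂₀ {G : Set A | IsAlphaFilter G ∧ X ⊆ G}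

/-!
A maximal α-filter `M` avoiding `a` is prime. Since `z ∈ x^⊥⊥` just means `x^⊥ ⊆ z^⊥`, the
α-filter generated by `M` and `x` is `{z | ∃ m ∈ M, (m * x)^⊥ ⊆ z^⊥}`. If `x ⊔ y ∈ M` with
`x, y ∉ M`, maximality puts `a` into the α-filters generated by `M, x` and by `M, y`, witnessed by
`m₁, m₂ ∈ M`. Using `(u * v)^⊥ = u^⊥ ∩ v^⊥` one gets `(m₁ * m₂ * (x ⊔ y))^⊥ ⊆ a^⊥`, so `a ∈ M`.
Zorn's lemma supplies such an `M` above any α-filter not containing `a`.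
-/

namespace ResLattice

instance : IsOrderedMonoid A where
  mul_le_mul_left a b hab c :=
    (adjunction a c (b * c)).2 (hab.trans ((adjunction b c (b * c)).1 le_rfl))

theorem mul_le_left (a b : A) : a * b ≤ a := mul_le_of_le_one_right' (le_one b)

theorem mul_le_right (a b : A) : a * b ≤ b := mul_le_of_le_one_left' (le_one a)

theorem eq_one_of_one_le {a : A} (h : 1 ≤ a) : a = 1 := (le_one a).antisymm h

theorem mul_sup_le (a b c : A) : a * (b ⊔ c) ≤ a * b ⊔ a * c := by
  rw [mul_comm, adjunction]
  refine sup_le ((adjunction _ _ _).1 ?_) ((adjunction _ _ _).1 ?_)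
  · rw [mul_comm]; exact le_sup_left
  · rw [mul_comm]; exact le_sup_right

theorem sup_mul_sup_le (c a b : A) : (c ⊔ a) * (c ⊔ b) ≤ c ⊔ a * b :=
  calc (c ⊔ a) * (c ⊔ b) ≤ (c ⊔ a) * c ⊔ (c ⊔ a) * b := mul_sup_le _ _ _
    _ ≤ c ⊔ (c * b ⊔ a * b) := sup_le_sup (mul_le_right _ _) (by
        rw [mul_comm, mul_comm c, mul_comm a]; exact mul_sup_le _ _ _)
    _ ≤ c ⊔ a * b := by
        rw [← sup_assoc]; exact sup_le_sup_right (sup_le le_rfl (mul_le_left c b)) _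

theorem sup_eq_one_mono {a b c d : A} (h : a ⊔ b = 1) (hac : a ≤ c) (hbd : b ≤ d) :
    c ⊔ d = 1 :=
  eq_one_of_one_le (h ▸ sup_le_sup hac hbd)

theorem sup_mul_eq_one {c a b : A} : c ⊔ a * b = 1 ↔ c ⊔ a = 1 ∧ c ⊔ b = 1 := by
  refine ⟨fun h => ⟨?_, ?_⟩, fun ⟨ha, hb⟩ => ?_⟩
  · exact sup_eq_one_mono h le_rfl (mul_le_left a b)
  · exact sup_eq_one_mono h le_rfl (mul_le_right a b)
  · exact eq_one_of_one_le (by simpa [ha, hb] using sup_mul_sup_le c a b)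

end ResLattice

open ResLattice

theorem mem_rperp {c x : A} : c ∈ rperp x ↔ c ⊔ x = 1 := by
  simp [rperp, Coann]

theorem rperp_mono : Monotone (rperp : A → Set A) := fun _ _ hxy _ hc =>
  mem_rperp.2 (sup_eq_one_mono (mem_rperp.1 hc) le_rfl hxy)

theorem mem_rperp_of_le {c d x : A} (hc : c ∈ rperp x) (hcd : c ≤ d) : d ∈ rperp x :=
  mem_rperp.2 (sup_eq_one_mono (mem_rperp.1 hc) hcd le_rfl)

theorem rperp_mul (x y : A) : rperp (x * y) = rperp x ∩ rperp y := by
  ext c; simp only [Set.mem_inter_iff, mem_rperp, sup_mul_eq_one]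

theorem mem_coann_rperp {x z : A} : z ∈ Coann (rperp x) ↔ rperp x ⊆ rperp z := by
  simp only [Coann, Set.subset_def, mem_rperp, Set.mem_ofPred_eq, sup_comm z]

theorem rperp_mul_sup_subset {m x y a : A} (hx : rperp (m * x) ⊆ rperp a)
    (hy : rperp (m * y) ⊆ rperp a) : rperp (m * (x ⊔ y)) ⊆ rperp a := by
  intro c hc
  rw [rperp_mul] at hc
  obtain ⟨hcm, hcxy⟩ := hc
  have hcx : c ⊔ x ∈ rperp (m * y) := by
    rw [rperp_mul]
    refine ⟨mem_rperp_of_le hcm le_sup_left, ?_⟩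
    simpa only [mem_rperp, sup_assoc] using hcxy
  have hac : a ⊔ c ∈ rperp (m * x) := by
    rw [rperp_mul]
    refine ⟨mem_rperp_of_le hcm le_sup_right, ?_⟩
    simpa only [mem_rperp, sup_comm, sup_left_comm] using hy hcx
  simpa only [mem_rperp, sup_comm, sup_left_comm, sup_left_idem] using hx hac

theorem IsRLFilter.mul_mem {F : Set A} (hF : IsRLFilter F) {x y : A} (hx : x ∈ F)
    (hy : y ∈ F) : x * y ∈ F :=
  hF.2.1 x hx y hy

def alphaAdjoin (M : Set A) (x : A) : Set A := {z | ∃ m ∈ M, rperp (m * x) ⊆ rperp z}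

theorem subset_alphaAdjoin (M : Set A) (x : A) : M ⊆ alphaAdjoin M x :=
  fun m hm => ⟨m, hm, rperp_mono (mul_le_left m x)⟩

theorem mem_alphaAdjoin_self {M : Set A} (hM : M.Nonempty) (x : A) : x ∈ alphaAdjoin M x :=
  let ⟨m, hm⟩ := hM
  ⟨m, hm, rperp_mono (mul_le_right m x)⟩

theorem isAlphaFilter_alphaAdjoin {M : Set A} (hM : IsRLFilter M) (x : A) :
    IsAlphaFilter (alphaAdjoin M x) := by
  refine ⟨⟨⟨x, mem_alphaAdjoin_self hM.1 x⟩, ?_, ?_⟩, ?_⟩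
  · rintro z ⟨m₁, hm₁, hz⟩ w ⟨m₂, hm₂, hw⟩
    refine ⟨m₁ * m₂, hM.mul_mem hm₁ hm₂, ?_⟩
    rw [rperp_mul z w]
    exact Set.subset_inter
      ((rperp_mono (mul_le_mul_left (mul_le_left m₁ m₂) x)).trans hz)
      ((rperp_mono (mul_le_mul_left (mul_le_right m₁ m₂) x)).trans hw)
  · rintro z ⟨m, hm, hz⟩ y
    exact ⟨m, hm, hz.trans (rperp_mono le_sup_left)⟩
  · rintro z ⟨m, hm, hz⟩ w hw
    exact ⟨m, hm, hz.trans (mem_coann_rperp.1 hw)⟩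

theorem isAlphaFilter_sUnion {c : Set (Set A)} (hc : ∀ G ∈ c, IsAlphaFilter G)
    (hchain : IsChain (· ⊆ ·) c) (hne : c.Nonempty) : IsAlphaFilter (⋃₀ c) := by
  obtain ⟨G₀, hG₀⟩ := hne
  refine ⟨⟨?_, ?_, ?_⟩, ?_⟩
  · obtain ⟨g, hg⟩ := (hc G₀ hG₀).1.1
    exact ⟨g, G₀, hG₀, hg⟩
  · rintro z ⟨G₁, hG₁, hz⟩ w ⟨G₂, hG₂, hw⟩
    rcases hchain.total hG₁ hG₂ with h | h
    · exact ⟨G₂, hG₂, (hc G₂ hG₂).1.mul_mem (h hz) hw⟩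
    · exact ⟨G₁, hG₁, (hc G₁ hG₁).1.mul_mem hz (h hw)⟩
  · rintro z ⟨G, hG, hz⟩ y
    exact ⟨G, hG, (hc G hG).1.2.2 z hz y⟩
  · rintro z ⟨G, hG, hz⟩ w hw
    exact ⟨G, hG, (hc G hG).2 z hz hw⟩

theorem exists_maximal_isAlphaFilter_notMem {F : Set A} (hF : IsAlphaFilter F) {a : A}
    (ha : a ∉ F) : ∃ M, F ⊆ M ∧ Maximal (fun G => IsAlphaFilter G ∧ a ∉ G) M := by
  refine zorn_subset_nonempty _ (fun c hcS hchain hne => ?_) F ⟨hF, ha⟩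
  refine ⟨⋃₀ c, ⟨isAlphaFilter_sUnion (fun G hG => (hcS hG).1) hchain hne, ?_⟩,
    fun _ => Set.subset_sUnion_of_mem⟩
  rintro ⟨G, hG, haG⟩
  exact (hcS hG).2 haG

theorem isRLPrime_of_maximal {M : Set A} {a : A}
    (hM : Maximal (fun G => IsAlphaFilter G ∧ a ∉ G) M) : IsRLPrime M := by
  obtain ⟨⟨hMα, haM⟩, hmax⟩ := hM
  have mem_adjoin : ∀ x ∉ M, a ∈ alphaAdjoin M x := fun x hx => by
    by_contra haX
    exact hx (hmax ⟨isAlphaFilter_alphaAdjoin hMα.1 x, haX⟩ (subset_alphaAdjoin M x)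
      (mem_alphaAdjoin_self hMα.1.1 x))
  refine ⟨hMα.1, fun h => haM (h ▸ Set.mem_univ a), fun x y hxy => ?_⟩
  by_contra! ⟨hx, hy⟩
  obtain ⟨m₁, hm₁, hax⟩ := mem_adjoin x hx
  obtain ⟨m₂, hm₂, hay⟩ := mem_adjoin y hy
  have hm : m₁ * m₂ ∈ M := hMα.1.mul_mem hm₁ hm₂
  have key : rperp (m₁ * m₂ * (x ⊔ y)) ⊆ rperp a := rperp_mul_sup_subset
    ((rperp_mono (mul_le_mul_left (mul_le_left m₁ m₂) x)).trans hax)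
    ((rperp_mono (mul_le_mul_left (mul_le_right m₁ m₂) y)).trans hay)
  exact haM (hMα.2 _ (hMα.1.mul_mem hm hxy) (mem_coann_rperp.2 key))

theorem stmt14_general (F : Set A) (hF : IsAlphaFilter F) :
    F = ⋂₀ {P : Set A | IsRLPrime P ∧ IsAlphaFilter P ∧ F ⊆ P} := by
  refine (Set.subset_sInter fun P hP => hP.2.2).antisymm fun a ha => ?_
  by_contra haF
  obtain ⟨M, hFM, hM⟩ := exists_maximal_isAlphaFilter_notMem hF haF
  exact hM.1.2 (ha M ⟨isRLPrime_of_maximal hM, hM.1.1, hFM⟩)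

theorem stmt14 (F : Set A) (hF : IsAlphaFilter F) (hproper : F ≠ Set.univ) :
    F = ⋂₀ {P : Set A | IsRLPrime P ∧ IsAlphaFilter P ∧ F ⊆ P} :=
  stmt14_general F hF
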